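/- arXiv:1803.05857 — 2 statements merged into one kernel-verified Lean document; each statement's English description precedes it below -/
import Mathlib

section
/- Let N, l, m be positive integers with l ≤ N − 1, N ≠ 2l and 1 ≤ m ≤ N. Then the second moments of the real and imaginary parts of X̃_l(m,N) satisfy E[(Ũ_l(m,N))²] = E[(Ṽ_l(m,N))²] = m(N − m)/(2N). -/
/-!
Write `U = ∑ c n * B n` with `c n = cos (2πnl/N)`. Since the `B n` are pairwise independent
Bernoulli(`p`) variables, `p = m/N`, we get `E[U²] = Var U + (E U)² = p(1-p) ∑ c n² + p² (∑ c n)²`.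
For `N ∤ k` the sums of `cos (2πnk/N)` and `sin (2πnk/N)` over a full period vanish, being the
real and imaginary parts of a geometric sum of an `N`-th root of unity different from `1`. With
`k = l` this kills `∑ c n`; with `k = 2l`, not a multiple of `N` as `0 < 2l < 2N` and `2l ≠ N`,
and `cos² x = (1 + cos 2x)/2` it gives `∑ c n² = N/2`. The same holds for the sines.
-/

open MeasureTheory ProbabilityTheory Finset

theorem sum_Icc_one_pow_eq_zero {R : Type*} [CommRing R] [IsDomain R] {ζ : R} {N : ℕ}
    (hζN : ζ ^ N = 1) (hζ : ζ ≠ 1) : ∑ n ∈ Icc 1 N, ζ ^ n = 0 := by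
  have hgeom : ∑ i ∈ range N, ζ ^ i = 0 := by
    have h := geom_sum_mul ζ N
    rw [hζN, sub_self] at h
    exact (mul_eq_zero.1 h).resolve_right (sub_ne_zero.2 hζ)
  rw [← Ico_add_one_right_eq_Icc, sum_Ico_eq_sum_range, add_tsub_cancel_right]
  simp only [add_comm 1, pow_succ, ← sum_mul, hgeom, zero_mul]

open Complex in
theorem sum_exp_two_pi_mul_I_eq_zero {N k : ℕ} (hk : ¬ N ∣ k) :
    ∑ n ∈ Icc 1 N, exp ((2 * Real.pi * n * k / N : ℝ) * I) = 0 := by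
  obtain rfl | hN := eq_or_ne N 0
  · simp
  have hω := isPrimitiveRoot_exp N hN
  set ω := exp (2 * Real.pi * I / N)
  have hpow (n : ℕ) : exp ((2 * Real.pi * n * k / N : ℝ) * I) = (ω ^ k) ^ n := by
    rw [← pow_mul, ← exp_nat_mul]
    push_cast
    ring_nf
  simp only [hpow]
  refine sum_Icc_one_pow_eq_zero ?_ ((hω.pow_eq_one_iff_dvd k).not.2 hk)
  rw [← pow_mul, mul_comm, pow_mul, hω.pow_eq_one, one_pow]

theorem sum_cos_two_pi_mul_div_eq_zero {N k : ℕ} (hk : ¬ N ∣ k) :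
    ∑ n ∈ Icc 1 N, Real.cos (2 * Real.pi * n * k / N) = 0 := by
  simpa only [Complex.re_sum, Complex.exp_ofReal_mul_I_re, Complex.zero_re] using
    congrArg Complex.re (sum_exp_two_pi_mul_I_eq_zero hk)

theorem sum_sin_two_pi_mul_div_eq_zero {N k : ℕ} (hk : ¬ N ∣ k) :
    ∑ n ∈ Icc 1 N, Real.sin (2 * Real.pi * n * k / N) = 0 := by
  simpa only [Complex.im_sum, Complex.exp_ofReal_mul_I_im, Complex.zero_im] using
    congrArg Complex.im (sum_exp_two_pi_mul_I_eq_zero hk)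

theorem sum_cos_sq_two_pi_mul_div {N k : ℕ} (hk : ¬ N ∣ 2 * k) :
    ∑ n ∈ Icc 1 N, Real.cos (2 * Real.pi * n * k / N) ^ 2 = N / 2 := by
  have hdouble : ∀ n : ℕ, Real.cos (2 * Real.pi * n * k / N) ^ 2
      = 1 / 2 + Real.cos (2 * Real.pi * n * (2 * k : ℕ) / N) / 2 := by
    intro n
    rw [Real.cos_sq]
    push_cast
    ring_nf
  simp only [hdouble, sum_add_distrib, ← sum_div, sum_cos_two_pi_mul_div_eq_zero hk, sum_const,
    Nat.card_Icc]
  simp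

theorem sum_sin_sq_two_pi_mul_div {N k : ℕ} (hk : ¬ N ∣ 2 * k) :
    ∑ n ∈ Icc 1 N, Real.sin (2 * Real.pi * n * k / N) ^ 2 = N / 2 := by
  simp only [Real.sin_sq, sum_sub_distrib, sum_cos_sq_two_pi_mul_div hk, sum_const, Nat.card_Icc,
    add_tsub_cancel_right, nsmul_eq_mul, mul_one]
  ring

theorem ProbabilityTheory.iIndepFun.pairwise_indepFun_Icc_one {Ω β : Type*}
    [MeasurableSpace Ω] [MeasurableSpace β] {P : Measure Ω} {B : ℕ → Ω → β} {N : ℕ}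
    (h : iIndepFun (fun i : Fin N => B (i.1 + 1)) P) :
    Set.Pairwise ↑(Icc 1 N) fun i j => B i ⟂ᵢ[P] B j := by
  intro i hi j hj hij
  simp only [coe_Icc, Set.mem_Icc] at hi hj
  have hne : (⟨i - 1, by omega⟩ : Fin N) ≠ ⟨j - 1, by omega⟩ := by
    simp only [ne_eq, Fin.mk.injEq]
    omega
  simpa only [Nat.sub_add_cancel hi.1, Nat.sub_add_cancel hj.1] using h.indepFun hne

section Moments

variable {Ω : Type*} [MeasurableSpace Ω] {P : Measure Ω} [IsProbabilityMeasure P]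

theorem integral_sq_sum_mul_of_pairwise_indepFun {ι : Type*} {s : Finset ι}
    {X : ι → Ω → ℝ} (hX : ∀ i ∈ s, MemLp (X i) 2 P)
    (hindep : Set.Pairwise ↑s fun i j => X i ⟂ᵢ[P] X j)
    (c : ι → ℝ) :
    ∫ ω, (∑ i ∈ s, c i * X i ω) ^ 2 ∂P
      = ∑ i ∈ s, c i ^ 2 * Var[X i; P] + (∑ i ∈ s, c i * P[X i]) ^ 2 := by
  have hcX : ∀ i ∈ s, MemLp (fun ω => c i * X i ω) 2 P := fun i hi =>
    (hX i hi).const_mul (c i)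
  have hS : MemLp (∑ i ∈ s, fun ω => c i * X i ω) 2 P := memLp_finsetSum' s hcX
  have hvar : Var[∑ i ∈ s, fun ω => c i * X i ω; P] = ∑ i ∈ s, c i ^ 2 * Var[X i; P] := by
    rw [IndepFun.variance_sum hcX fun i hi j hj hij =>
      (hindep hi hj hij).comp (measurable_const_mul (c i)) (measurable_const_mul (c j))]
    simp only [variance_const_mul]
  have hmean : P[∑ i ∈ s, fun ω => c i * X i ω] = ∑ i ∈ s, c i * P[X i] := by
    simp only [Finset.sum_apply]
    rw [integral_finsetSum s fun i hi => (hcX i hi).integrable one_le_two]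
    simp only [integral_const_mul]
  rw [← hvar, ← hmean, variance_eq_sub hS, sub_add_cancel]
  simp only [Pi.pow_apply, Finset.sum_apply]

section Bernoulli

variable {X : Ω → ℝ} {a : ENNReal}

theorem ae_eq_zero_or_one_of_measure_eq (hX : Measurable X) (h1 : P {ω | X ω = 1} = a)
    (h0 : P {ω | X ω = 0} = 1 - a) : ∀ᵐ ω ∂P, X ω = 0 ∨ X ω = 1 := by
  have hs0 : MeasurableSet {ω | X ω = 0} := hX (measurableSet_singleton 0)
  have hs1 : MeasurableSet {ω | X ω = 1} := hX (measurableSet_singleton 1)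
  have hdisj : Disjoint {ω | X ω = 0} {ω | X ω = 1} :=
    Set.disjoint_left.2 fun ω h0 h1 => zero_ne_one (h0.symm.trans h1)
  have ha : a ≤ 1 := h1 ▸ prob_le_one
  refine (mem_ae_iff_prob_eq_one (hs0.union hs1)).2 ?_
  rw [measure_union hdisj hs1, h0, h1, tsub_add_cancel_of_le ha]

theorem memLp_of_measure_eq (hX : Measurable X) (h1 : P {ω | X ω = 1} = a)
    (h0 : P {ω | X ω = 0} = 1 - a) (p : ENNReal) : MemLp X p P := by
  refine MemLp.of_bound hX.aestronglyMeasurable 1 ?_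
  filter_upwards [ae_eq_zero_or_one_of_measure_eq hX h1 h0] with ω hω
  rcases hω with h | h <;> simp [h]

theorem integral_eq_toReal_of_measure_eq (hX : Measurable X) (h1 : P {ω | X ω = 1} = a)
    (h0 : P {ω | X ω = 0} = 1 - a) : P[X] = a.toReal := by
  have hind : X =ᵐ[P] {ω | X ω = 1}.indicator 1 := by
    filter_upwards [ae_eq_zero_or_one_of_measure_eq hX h1 h0] with ω hω
    rcases hω with h | h <;> simp [h]
  have hs1 : MeasurableSet {ω | X ω = 1} := hX (measurableSet_singleton 1)
  rw [integral_congr_ae hind, integral_indicator_one hs1, measureReal_def, h1]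

theorem variance_eq_toReal_of_measure_eq (hX : Measurable X) (h1 : P {ω | X ω = 1} = a)
    (h0 : P {ω | X ω = 0} = 1 - a) : Var[X; P] = a.toReal * (1 - a.toReal) := by
  have hsq : X ^ 2 =ᵐ[P] X := by
    filter_upwards [ae_eq_zero_or_one_of_measure_eq hX h1 h0] with ω hω
    rcases hω with h | h <;> simp [h]
  rw [variance_eq_sub (memLp_of_measure_eq hX h1 h0 2), integral_congr_ae hsq,
    integral_eq_toReal_of_measure_eq hX h1 h0]
  ring

theorem integral_sq_sum_mul_of_measure_eq {ι : Type*} {s : Finset ι} {X : ι → Ω → ℝ}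
    (hX : ∀ i ∈ s, Measurable (X i)) (hindep : Set.Pairwise ↑s fun i j => X i ⟂ᵢ[P] X j)
    (h1 : ∀ i ∈ s, P {ω | X i ω = 1} = a) (h0 : ∀ i ∈ s, P {ω | X i ω = 0} = 1 - a)
    (c : ι → ℝ) :
    ∫ ω, (∑ i ∈ s, c i * X i ω) ^ 2 ∂P
      = a.toReal * (1 - a.toReal) * ∑ i ∈ s, c i ^ 2 + (a.toReal * ∑ i ∈ s, c i) ^ 2 := by
  rw [integral_sq_sum_mul_of_pairwise_indepFun
      (fun i hi => memLp_of_measure_eq (hX i hi) (h1 i hi) (h0 i hi) 2) hindep,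
    Finset.mul_sum, Finset.mul_sum]
  congr 1
  · refine Finset.sum_congr rfl fun i hi => ?_
    rw [variance_eq_toReal_of_measure_eq (hX i hi) (h1 i hi) (h0 i hi), mul_comm]
  · congr 1
    refine Finset.sum_congr rfl fun i hi => ?_
    rw [integral_eq_toReal_of_measure_eq (hX i hi) (h1 i hi) (h0 i hi), mul_comm]

end Bernoulli

end Moments

theorem stmt_3_general
    {Ω : Type*} [MeasurableSpace Ω] (P : Measure Ω) [IsProbabilityMeasure P]
    (N l m : ℕ) (hl : 0 < l) (hlN : l ≤ N - 1) (hNl : N ≠ 2 * l)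
    (B : ℕ → Ω → ℝ) (hBmeas : ∀ n, Measurable (B n))
    (hBindep : iIndepFun (fun i : Fin N => B (i.1 + 1)) P)
    (hB1 : ∀ n ∈ Finset.Icc 1 N, P {ω | B n ω = 1} = (m : ENNReal) / N)
    (hB0 : ∀ n ∈ Finset.Icc 1 N, P {ω | B n ω = 0} = 1 - (m : ENNReal) / N)
    (U : Ω → ℝ)
    (hU : U = fun ω => ∑ n ∈ Finset.Icc 1 N, Real.cos (2 * Real.pi * n * l / N) * B n ω)
    (V : Ω → ℝ)
    (hV : V = fun ω => -∑ n ∈ Finset.Icc 1 N, Real.sin (2 * Real.pi * n * l / N) * B n ω) :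
    (∫ ω, (U ω) ^ 2 ∂P) = (m : ℝ) * ((N : ℝ) - m) / (2 * N) ∧
    (∫ ω, (V ω) ^ 2 ∂P) = (m : ℝ) * ((N : ℝ) - m) / (2 * N) := by
  have hNl_dvd : ¬ N ∣ l := Nat.not_dvd_of_pos_of_lt hl (by omega)
  have hN2l_dvd : ¬ N ∣ 2 * l := fun h =>
    hNl (Nat.eq_of_dvd_of_lt_two_mul (by omega) h (by omega)).symm
  have hp : ((m : ENNReal) / N).toReal = m / N := by simp [ENNReal.toReal_div]
  have hsecond := integral_sq_sum_mul_of_measure_eq (fun n _ => hBmeas n)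
    hBindep.pairwise_indepFun_Icc_one hB1 hB0
  subst hU hV
  simp only [neg_sq]
  rw [hsecond, hsecond, hp, sum_cos_sq_two_pi_mul_div hN2l_dvd,
    sum_cos_two_pi_mul_div_eq_zero hNl_dvd, sum_sin_sq_two_pi_mul_div hN2l_dvd,
    sum_sin_two_pi_mul_div_eq_zero hNl_dvd]
  have hN0 : (N : ℝ) ≠ 0 := by norm_cast; omega
  constructor <;> field_simp <;> ring

theorem stmt_3
    {Ω : Type*} [MeasurableSpace Ω] (P : Measure Ω) [IsProbabilityMeasure P]
    (N l m : ℕ) (hN : 0 < N) (hl : 0 < l) (hlN : l ≤ N - 1) (hNl : N ≠ 2 * l) (hm : 1 ≤ m)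
    (hmN : m ≤ N)
    (B : ℕ → Ω → ℝ) (hBmeas : ∀ n, Measurable (B n))
    (hBindep : iIndepFun (fun i : Fin N => B (i.1 + 1)) P)
    (hB1 : ∀ n ∈ Finset.Icc 1 N, P {ω | B n ω = 1} = (m : ENNReal) / N)
    (hB0 : ∀ n ∈ Finset.Icc 1 N, P {ω | B n ω = 0} = 1 - (m : ENNReal) / N)
    (U : Ω → ℝ)
    (hU : U = fun ω => ∑ n ∈ Finset.Icc 1 N, Real.cos (2 * Real.pi * n * l / N) * B n ω)
    (V : Ω → ℝ)
    (hV : V = fun ω => -∑ n ∈ Finset.Icc 1 N, Real.sin (2 * Real.pi * n * l / N) * B n ω) :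
    (∫ ω, (U ω) ^ 2 ∂P) = (m : ℝ) * ((N : ℝ) - m) / (2 * N) ∧
    (∫ ω, (V ω) ^ 2 ∂P) = (m : ℝ) * ((N : ℝ) - m) / (2 * N) :=
  stmt_3_general P N l m hl hlN hNl B hBmeas hBindep hB1 hB0 U hU V hV
end

section
/- Let N, l, m be positive integers with l ≤ N − 1, N ≠ 2l and 1 ≤ m ≤ N. Then for every nonnegative real number t, P(| |X̃_l(m,N)| − E[|X̃_l(m,N)|] | ≥ t) ≤ 2·exp(−2t²/N), where |X̃_l(m,N)| denotes the complex modulus of X̃_l(m,N). -/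
/-!
Flipping one Bernoulli variable moves `X` by a unit vector, so `‖X‖` is a function of the
Bernoulli vector with bounded differences `1`. McDiarmid's inequality then makes
`‖X‖ - E ‖X‖` sub-Gaussian with variance proxy `N / 4`, and the Chernoff bound on both tails gives
`2 exp (-2 t² / N)`. McDiarmid's inequality is proved by integrating out one coordinate at a time:
Hoeffding's lemma controls the moment generating function of each fibre, and the fibre averages
again have bounded differences.
-/

open MeasureTheory ProbabilityTheory Finset
open scoped NNReal ENNReal

def HasBoundedDifferences {ι α : Type*} [DecidableEq ι] (f : (ι → α) → ℝ) (c : ι → ℝ≥0) :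
    Prop :=
  ∀ i (x : ι → α) (a : α), |f (Function.update x i a) - f x| ≤ c i

lemma HasBoundedDifferences.abs_sub_cons_le {α : Type*} {n : ℕ} {f : (Fin (n + 1) → α) → ℝ}
    {c : Fin (n + 1) → ℝ≥0} (hf : HasBoundedDifferences f c) (y : Fin n → α) (a b : α) :
    |f (Fin.cons a y) - f (Fin.cons b y)| ≤ c 0 := by
  simpa only [Fin.update_cons_zero] using hf 0 (Fin.cons b y) a

lemma hasBoundedDifferences_norm_sum {ι α E : Type*} [Fintype ι] [DecidableEq ι]
    [SeminormedAddCommGroup E] {φ : ι → α → E} {c : ι → ℝ≥0}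
    (hφ : ∀ i a b, ‖φ i a - φ i b‖ ≤ c i) :
    HasBoundedDifferences (fun x ↦ ‖∑ i, φ i (x i)‖) c := by
  intro i x a
  refine (abs_norm_sub_norm_le _ _).trans ?_
  rw [← sum_sub_distrib, sum_eq_single i (fun j _ hj ↦ by simp [hj]) (by simp)]
  simpa using hφ i a (x i)

section FiniteSpace

variable {α : Type*} [MeasurableSpace α] [MeasurableSingletonClass α] [Finite α]

lemma hasSubgaussianMGF_sub_integral_of_abs_sub_le {ν : Measure α} [IsProbabilityMeasure ν]
    {g : α → ℝ} {c : ℝ≥0} (hg : ∀ a b, |g a - g b| ≤ c) :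
    HasSubgaussianMGF (fun a ↦ g a - ∫ a, g a ∂ν) ((c / 2) ^ 2) ν := by
  have := nonempty_of_isProbabilityMeasure ν
  have hmem : ∀ a, g a ∈ Set.Icc (⨅ b, g b) ((⨅ b, g b) + c) := fun a ↦
    ⟨ciInf_le (Set.finite_range g).bddBelow a,
      sub_le_iff_le_add.1 (le_ciInf fun b ↦ by linarith [(abs_sub_le_iff.1 (hg a b)).1])⟩
  convert hasSubgaussianMGF_of_mem_Icc (measurable_of_finite g).aemeasurable (ae_of_all ν hmem)
  ext
  simp

lemma integral_pi_fin_succ {n : ℕ} (ν : Fin (n + 1) → Measure α) [∀ i, IsFiniteMeasure (ν i)]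
    (F : (Fin (n + 1) → α) → ℝ) :
    ∫ x, F x ∂Measure.pi ν = ∫ y, ∫ a, F (Fin.cons a y) ∂ν 0 ∂Measure.pi (fun i ↦ ν i.succ) := by
  rw [← (measurePreserving_piFinSuccAbove ν 0).symm.integral_comp',
    integral_prod_symm _ Integrable.of_finite]
  simp [Fin.consEquiv]

lemma HasBoundedDifferences.integral_cons {n : ℕ} {f : (Fin (n + 1) → α) → ℝ}
    {c : Fin (n + 1) → ℝ≥0} (hf : HasBoundedDifferences f c) (ν : Measure α)
    [IsProbabilityMeasure ν] :
    HasBoundedDifferences (fun y ↦ ∫ a, f (Fin.cons a y) ∂ν) (fun i ↦ c i.succ) := by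
  intro i y b
  rw [← integral_sub Integrable.of_finite Integrable.of_finite, ← Real.norm_eq_abs]
  refine (norm_integral_le_of_norm_le_const (C := c i.succ) (ae_of_all ν fun a ↦ ?_)).trans_eq ?_
  · simpa only [Fin.cons_update, Real.norm_eq_abs] using hf i.succ (Fin.cons a y) b
  · simp

/-- McDiarmid's inequality, in moment generating function form. -/
theorem HasBoundedDifferences.hasSubgaussianMGF_pi {n : ℕ} {ν : Fin n → Measure α}
    [∀ i, IsProbabilityMeasure (ν i)] {f : (Fin n → α) → ℝ} {c : Fin n → ℝ≥0}
    (hf : HasBoundedDifferences f c) :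
    HasSubgaussianMGF (fun x ↦ f x - ∫ x, f x ∂Measure.pi ν) (∑ i, (c i / 2) ^ 2)
      (Measure.pi ν) := by
  induction n with
  | zero =>
    have hconst : (fun x ↦ f x - ∫ x, f x ∂Measure.pi ν) = fun _ ↦ 0 := by
      ext x
      simp [integral_unique, Subsingleton.elim x default]
    simp [hconst]
  | succ n ih =>
    set g : (Fin n → α) → ℝ := fun y ↦ ∫ a, f (Fin.cons a y) ∂ν 0
    have hg := ih (ν := fun i ↦ ν i.succ) (hf.integral_cons (ν 0))
    have hfibre (y : Fin n → α) :=
      hasSubgaussianMGF_sub_integral_of_abs_sub_le (ν := ν 0) (hf.abs_sub_cons_le y)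
    have hmean : ∫ x, f x ∂Measure.pi ν = ∫ y, g y ∂Measure.pi (fun i ↦ ν i.succ) :=
      integral_pi_fin_succ ν f
    refine ⟨fun t ↦ Integrable.of_finite, fun t ↦ ?_⟩
    calc mgf (fun x ↦ f x - ∫ x, f x ∂Measure.pi ν) (Measure.pi ν) t
        = ∫ y, Real.exp (t * (g y - ∫ y, g y ∂Measure.pi (fun i ↦ ν i.succ))) *
            mgf (fun a ↦ f (Fin.cons a y) - g y) (ν 0) t ∂Measure.pi (fun i ↦ ν i.succ) := by
          rw [mgf, integral_pi_fin_succ, hmean]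
          congr 1 with y
          rw [mgf, ← integral_const_mul]
          congr 1 with a
          rw [← Real.exp_add]
          ring_nf
      _ ≤ ∫ y, Real.exp (t * (g y - ∫ y, g y ∂Measure.pi (fun i ↦ ν i.succ))) *
            Real.exp ((c 0 / 2) ^ 2 * t ^ 2 / 2) ∂Measure.pi (fun i ↦ ν i.succ) := by
          refine integral_mono Integrable.of_finite Integrable.of_finite fun y ↦ ?_
          exact mul_le_mul_of_nonneg_left (by exact_mod_cast (hfibre y).mgf_le t) (by positivity)
      _ ≤ Real.exp ((∑ i : Fin n, (c i.succ / 2) ^ 2 : ℝ≥0) * t ^ 2 / 2) *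
            Real.exp ((c 0 / 2) ^ 2 * t ^ 2 / 2) := by
          rw [integral_mul_const]
          exact mul_le_mul_of_nonneg_right (hg.mgf_le t) (by positivity)
      _ = Real.exp ((∑ i, (c i / 2) ^ 2 : ℝ≥0) * t ^ 2 / 2) := by
          rw [← Real.exp_add, Fin.sum_univ_succ]
          push_cast
          ring_nf

theorem ProbabilityTheory.iIndepFun.hasSubgaussianMGF_of_hasBoundedDifferences {Ω : Type*}
    [MeasurableSpace Ω] {P : Measure Ω} [IsProbabilityMeasure P] {n : ℕ} {Y : Fin n → Ω → α}
    (hY : ∀ i, Measurable (Y i)) (hindep : iIndepFun Y P) {f : (Fin n → α) → ℝ}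
    {c : Fin n → ℝ≥0} (hf : HasBoundedDifferences f c) :
    HasSubgaussianMGF (fun ω ↦ f (fun i ↦ Y i ω) - ∫ ω, f (fun i ↦ Y i ω) ∂P)
      (∑ i, (c i / 2) ^ 2) P := by
  have hYvec : Measurable fun ω i ↦ Y i ω := measurable_pi_lambda _ hY
  have hlaw := hindep.map_fun_eq_pi_map fun i ↦ (hY i).aemeasurable
  have (i : Fin n) := Measure.isProbabilityMeasure_map (μ := P) (hY i).aemeasurable
  have := hf.hasSubgaussianMGF_pi (ν := fun i ↦ P.map (Y i))
  rw [← hlaw, integral_map hYvec.aemeasurable (measurable_of_finite f).aestronglyMeasurable] at this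
  exact this.of_map hYvec.aemeasurable

end FiniteSpace

lemma ProbabilityTheory.HasSubgaussianMGF.measureReal_abs_ge_le {Ω : Type*} [MeasurableSpace Ω]
    {μ : Measure Ω} {X : Ω → ℝ} {c : ℝ≥0} (h : HasSubgaussianMGF X c μ) {ε : ℝ} (hε : 0 ≤ ε) :
    μ.real {ω | ε ≤ |X ω|} ≤ 2 * Real.exp (-ε ^ 2 / (2 * c)) := by
  have hsplit : {ω | ε ≤ |X ω|} = {ω | ε ≤ X ω} ∪ {ω | ε ≤ (-X) ω} := by
    ext ω
    simp [le_abs]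
  rw [hsplit, two_mul]
  exact (measureReal_union_le _ _).trans (add_le_add (h.measure_ge_le hε) (h.neg.measure_ge_le hε))

lemma ae_eq_zero_or_eq_one_of_measure_eq {Ω : Type*} [MeasurableSpace Ω] {P : Measure Ω}
    [IsProbabilityMeasure P] {Z : Ω → ℝ} (hZ : Measurable Z) {a : ℝ≥0∞}
    (h1 : P {ω | Z ω = 1} = a) (h0 : P {ω | Z ω = 0} = 1 - a) :
    ∀ᵐ ω ∂P, Z ω = 0 ∨ Z ω = 1 := by
  have hmeas (r : ℝ) : MeasurableSet {ω | Z ω = r} := hZ (measurableSet_singleton r)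
  rw [ae_iff_measure_eq (by rw [Set.ofPred_or]; exact ((hmeas 0).union (hmeas 1)).nullMeasurableSet),
    Set.ofPred_or, measure_union (Set.disjoint_left.2 fun ω h0 h1 ↦ by simp_all) (hmeas 1), h0, h1,
    measure_univ]
  exact tsub_add_cancel_of_le (h1 ▸ prob_le_one)

lemma sum_Icc_one_eq_sum_fin {M : Type*} [AddCommMonoid M] (N : ℕ) (g : ℕ → M) :
    ∑ n ∈ Icc 1 N, g n = ∑ i : Fin N, g (i + 1) := by
  rw [← Ico_add_one_right_eq_Icc, sum_Ico_eq_sum_range, add_tsub_cancel_right,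
    ← Fin.sum_univ_eq_sum_range]
  simp only [add_comm]

theorem stmt_6_general
    {Ω : Type*} [MeasurableSpace Ω] (P : Measure Ω) [IsProbabilityMeasure P]
    (N l m : ℕ)
    (B : ℕ → Ω → ℝ) (hBmeas : ∀ n, Measurable (B n))
    (hBindep : iIndepFun (fun i : Fin N => B (i.1 + 1)) P)
    (hB1 : ∀ n ∈ Finset.Icc 1 N, P {ω | B n ω = 1} = (m : ENNReal) / N)
    (hB0 : ∀ n ∈ Finset.Icc 1 N, P {ω | B n ω = 0} = 1 - (m : ENNReal) / N)
    (X : Ω → ℂ)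
    (hX : X = fun ω => ∑ n ∈ Finset.Icc 1 N,
      Complex.exp (-(2 * (Real.pi : ℂ) * n * l / N) * Complex.I) * (B n ω : ℂ)) :
    ∀ t : ℝ, 0 ≤ t →
      P {ω | t ≤ |‖X ω‖ - ∫ ω', ‖X ω'‖ ∂P|}
        ≤ ENNReal.ofReal (2 * Real.exp (-(2 * t ^ 2) / N)) := by
  intro t ht
  set w : ℕ → ℂ := fun n ↦ Complex.exp (-(2 * (Real.pi : ℂ) * n * l / N) * Complex.I)
  set Y : Fin N → Ω → Bool := fun i ω ↦ B (i + 1) ω = 1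
  set f : (Fin N → Bool) → ℝ := fun b ↦ ‖∑ i : Fin N, if b i then w (i + 1) else 0‖
  have hdec : Measurable fun r : ℝ ↦ decide (r = 1) := measurable_to_bool (by simp [Set.preimage])
  have hY (i : Fin N) : Measurable (Y i) := hdec.comp (hBmeas _)
  have hf : HasBoundedDifferences f 1 :=
    hasBoundedDifferences_norm_sum (φ := fun (i : Fin N) (a : Bool) ↦ if a then w (i + 1) else 0)
      fun i a b ↦ by cases a <;> cases b <;> simp [w, Complex.norm_exp]
  have hXY : (fun ω ↦ ‖X ω‖) =ᵐ[P] fun ω ↦ f fun i ↦ Y i ω := by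
    have hBin : ∀ᵐ ω ∂P, ∀ i : Fin N, B (i + 1) ω = 0 ∨ B (i + 1) ω = 1 :=
      ae_all_iff.2 fun i ↦ ae_eq_zero_or_eq_one_of_measure_eq (hBmeas _)
        (hB1 _ (by simp)) (hB0 _ (by simp))
    filter_upwards [hBin] with ω hω
    simp only [hX, f, sum_Icc_one_eq_sum_fin]
    congr 2 with i
    rcases hω i with h | h <;> simp [Y, w, h]
  have hsub : HasSubgaussianMGF (fun ω ↦ ‖X ω‖ - ∫ ω, ‖X ω‖ ∂P) (∑ _ : Fin N, (1 / 2) ^ 2) P := by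
    rw [integral_congr_ae hXY]
    refine ((hBindep.comp _ fun _ ↦ hdec).hasSubgaussianMGF_of_hasBoundedDifferences hY hf).congr ?_
    filter_upwards [hXY] with ω h
    rw [h]
  rw [← ofReal_measureReal]
  refine ENNReal.ofReal_le_ofReal ((hsub.measureReal_abs_ge_le ht).trans_eq ?_)
  rw [sum_const, card_univ, Fintype.card_fin, nsmul_eq_mul]
  push_cast
  ring_nf

theorem stmt_6
    {Ω : Type*} [MeasurableSpace Ω] (P : Measure Ω) [IsProbabilityMeasure P]
    (N l m : ℕ) (hN : 0 < N) (hl : 0 < l) (hlN : l ≤ N - 1) (hNl : N ≠ 2 * l) (hm : 1 ≤ m)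
    (hmN : m ≤ N)
    (B : ℕ → Ω → ℝ) (hBmeas : ∀ n, Measurable (B n))
    (hBindep : iIndepFun (fun i : Fin N => B (i.1 + 1)) P)
    (hB1 : ∀ n ∈ Finset.Icc 1 N, P {ω | B n ω = 1} = (m : ENNReal) / N)
    (hB0 : ∀ n ∈ Finset.Icc 1 N, P {ω | B n ω = 0} = 1 - (m : ENNReal) / N)
    (X : Ω → ℂ)
    (hX : X = fun ω => ∑ n ∈ Finset.Icc 1 N,
      Complex.exp (-(2 * (Real.pi : ℂ) * n * l / N) * Complex.I) * (B n ω : ℂ)) :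
    ∀ t : ℝ, 0 ≤ t →
      P {ω | t ≤ |‖X ω‖ - ∫ ω', ‖X ω'‖ ∂P|}
        ≤ ENNReal.ofReal (2 * Real.exp (-(2 * t ^ 2) / N)) :=
  stmt_6_general P N l m B hBmeas hBindep hB1 hB0 X hX
end
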